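/- arXiv:2502.03611 — 2 statements merged into one kernel-verified Lean document; each statement's English description precedes it below -/
import Mathlib

section
/- Let A and N be symmetric positive definite matrices and set β* = (λ_min(N) + λ_max(N))/2. Then (λ_max(N) - β*)/(λ_min(A) + β*) < 1; consequently ‖(A + β*I)⁻¹(β*I - N)‖ < 1 in spectral norm. -/
/-!
Each factor is a function of one symmetric matrix, `(A + βI)⁻¹ = f(A)` and `βI - N = g(N)`, and the
continuous functional calculus of real matrices is isometric for the spectral norm, so `‖f(A)‖` is
bounded by `max |f|` over the eigenvalues. Hence `‖(A + β*I)⁻¹‖ ≤ (λ_min(A) + β*)⁻¹` and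
`‖β*I - N‖ ≤ λ_max(N) - β* = (λ_max(N) - λ_min(N))/2 < λ_min(A) + β*`, and submultiplicativity
bounds the norm of the product by the ratio.
-/

open Matrix

noncomputable def specNorm {n : ℕ} (A : Matrix (Fin n) (Fin n) ℝ) : ℝ :=
  ‖Matrix.toEuclideanCLM (𝕜 := ℝ) A‖

noncomputable def lamMin {n : ℕ} [NeZero n] {A : Matrix (Fin n) (Fin n) ℝ}
    (hA : A.IsHermitian) : ℝ :=
  Finset.univ.inf' Finset.univ_nonempty hA.eigenvalues

noncomputable def lamMax {n : ℕ} [NeZero n] {A : Matrix (Fin n) (Fin n) ℝ}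
    (hA : A.IsHermitian) : ℝ :=
  Finset.univ.sup' Finset.univ_nonempty hA.eigenvalues

open scoped Matrix.Norms.L2Operator

namespace Matrix.IsHermitian

variable {ι : Type*} [Fintype ι] [DecidableEq ι] {A : Matrix ι ι ℝ}

theorem norm_cfc_le (hA : A.IsHermitian) {f : ℝ → ℝ} {c : ℝ} (hc : 0 ≤ c)
    (h : ∀ i, |f (hA.eigenvalues i)| ≤ c) : ‖cfc f A‖ ≤ c := by
  refine _root_.norm_cfc_le hc ?_
  rw [hA.spectrum_real_eq_range_eigenvalues]
  rintro _ ⟨i, rfl⟩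
  exact h i

theorem smul_one_sub_eq_cfc (hA : A.IsHermitian) (β : ℝ) :
    β • (1 : Matrix ι ι ℝ) - A = cfc (β - ·) A := by
  rw [cfc_sub (fun _ : ℝ => β) (fun x : ℝ => x) A, cfc_const β A, cfc_id' ℝ A,
    Algebra.algebraMap_eq_smul_one]

theorem add_smul_one_eq_cfc (hA : A.IsHermitian) (β : ℝ) :
    A + β • (1 : Matrix ι ι ℝ) = cfc (· + β) A := by
  rw [cfc_add_const β (fun x : ℝ => x) A, cfc_id' ℝ A, Algebra.algebraMap_eq_smul_one]

theorem inv_add_smul_one_eq_cfc (hA : A.IsHermitian) {β : ℝ}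
    (hβ : ∀ i, hA.eigenvalues i + β ≠ 0) :
    (A + β • (1 : Matrix ι ι ℝ))⁻¹ = cfc (fun x => (x + β)⁻¹) A := by
  refine Matrix.inv_eq_left_inv ?_
  rw [hA.add_smul_one_eq_cfc, ← cfc_one ℝ A, ← cfc_mul (fun x : ℝ => (x + β)⁻¹) (· + β) A
    (A.finite_real_spectrum.continuousOn _)]
  refine cfc_congr fun x hx => ?_
  rw [hA.spectrum_real_eq_range_eigenvalues] at hx
  obtain ⟨i, rfl⟩ := hx
  exact inv_mul_cancel₀ (hβ i)

end Matrix.IsHermitian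

theorem specNorm_eq_norm {n : ℕ} (M : Matrix (Fin n) (Fin n) ℝ) : specNorm M = ‖M‖ :=
  (l2_opNorm_def M).symm

section Extremal

variable {n : ℕ} [NeZero n] {A : Matrix (Fin n) (Fin n) ℝ}

theorem lamMin_le_eigenvalues (hA : A.IsHermitian) (i : Fin n) : lamMin hA ≤ hA.eigenvalues i :=
  Finset.inf'_le _ (Finset.mem_univ i)

theorem eigenvalues_le_lamMax (hA : A.IsHermitian) (i : Fin n) : hA.eigenvalues i ≤ lamMax hA :=
  Finset.le_sup' _ (Finset.mem_univ i)

theorem lamMin_le_lamMax (hA : A.IsHermitian) : lamMin hA ≤ lamMax hA :=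
  (lamMin_le_eigenvalues hA 0).trans (eigenvalues_le_lamMax hA 0)

theorem Matrix.PosDef.lamMin_pos (hA : A.PosDef) : 0 < lamMin hA.1 :=
  (Finset.lt_inf'_iff _).mpr fun i _ => hA.eigenvalues_pos i

theorem norm_smul_one_sub_le (hA : A.IsHermitian) {β : ℝ}
    (hβ : 2 * β ≤ lamMin hA + lamMax hA) :
    ‖β • (1 : Matrix (Fin n) (Fin n) ℝ) - A‖ ≤ lamMax hA - β := by
  rw [hA.smul_one_sub_eq_cfc]
  refine hA.norm_cfc_le (by linarith [lamMin_le_lamMax hA]) fun i => abs_le.mpr ⟨?_, ?_⟩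
  · linarith [eigenvalues_le_lamMax hA i]
  · linarith [lamMin_le_eigenvalues hA i]

theorem norm_inv_add_smul_one_le (hA : A.IsHermitian) {β : ℝ} (hβ : 0 < lamMin hA + β) :
    ‖(A + β • (1 : Matrix (Fin n) (Fin n) ℝ))⁻¹‖ ≤ (lamMin hA + β)⁻¹ := by
  have hpos : ∀ i, 0 < hA.eigenvalues i + β := fun i => by linarith [lamMin_le_eigenvalues hA i]
  rw [hA.inv_add_smul_one_eq_cfc fun i => (hpos i).ne']
  refine hA.norm_cfc_le (inv_nonneg.mpr hβ.le) fun i => ?_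
  rw [abs_of_pos (inv_pos.mpr (hpos i))]
  exact inv_anti₀ hβ (by linarith [lamMin_le_eigenvalues hA i])

end Extremal

/-- For `A, N` SPD and `β* = (λ_min(N)+λ_max(N))/2`, one has
`(λ_max(N) - β*)/(λ_min(A) + β*) < 1` and `‖(A + β*I)⁻¹(β*I - N)‖ < 1`. -/
theorem specNorm_lt_one_of_optimal_beta {n : ℕ} [NeZero n]
    (A N : Matrix (Fin n) (Fin n) ℝ)
    (hA : A.PosDef) (hN : N.PosDef)
    (β : ℝ) (hβ : β = (lamMin hN.1 + lamMax hN.1) / 2) :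
    (lamMax hN.1 - β) / (lamMin hA.1 + β) < 1 ∧
      specNorm ((A + β • 1)⁻¹ * (β • 1 - N)) < 1 := by
  have hA₀ := hA.lamMin_pos
  have hN₀ := hN.lamMin_pos
  have hN₁ := lamMin_le_lamMax hN.1
  have hden : 0 < lamMin hA.1 + β := by rw [hβ]; linarith
  have hratio : (lamMax hN.1 - β) / (lamMin hA.1 + β) < 1 := by
    rw [div_lt_one hden, hβ]; linarith
  refine ⟨hratio, lt_of_le_of_lt ?_ hratio⟩
  rw [specNorm_eq_norm]
  calc ‖(A + β • 1)⁻¹ * (β • 1 - N)‖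
      ≤ ‖(A + β • (1 : Matrix (Fin n) (Fin n) ℝ))⁻¹‖ * ‖β • 1 - N‖ := norm_mul_le _ _
    _ ≤ (lamMin hA.1 + β)⁻¹ * (lamMax hN.1 - β) := by
      gcongr
      · exact norm_inv_add_smul_one_le hA.1 hden
      · exact norm_smul_one_sub_le hN.1 (by rw [hβ]; linarith)
    _ = (lamMax hN.1 - β) / (lamMin hA.1 + β) := inv_mul_eq_div _ _
end

section
/- Define g(β) = (max_{μ ∈ Λ(N)} |β - μ|)/(min_{λ ∈ Λ(A)} |λ + β|) for β > -λ_min(A), where A is symmetric positive definite and N is symmetric with λ_min(N) > -λ_min(A). Then g attains its unique minimum at β = (λ_min(N) + λ_max(N))/2. -/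
open Matrix

/-- The function `g(β) = (max_{μ∈Λ(N)} |β-μ|)/(min_{λ∈Λ(A)} |λ+β|)` attains its unique
minimum on `(-λ_min(A), ∞)` at `β = (λ_min(N)+λ_max(N))/2`. -/
theorem g_unique_min {n : ℕ} [NeZero n]
    (A N : Matrix (Fin n) (Fin n) ℝ)
    (hA : A.PosDef) (hN : N.IsHermitian)
    (hNA : -lamMin hA.1 < lamMin hN)
    (g : ℝ → ℝ)
    (hg : ∀ β : ℝ, g β =
      (Finset.univ.sup' Finset.univ_nonempty (fun i => |β - hN.eigenvalues i|)) /
      (Finset.univ.inf' Finset.univ_nonempty (fun i => |hA.1.eigenvalues i + β|))) :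
    (∀ β : ℝ, -lamMin hA.1 < β →
        g ((lamMin hN + lamMax hN) / 2) ≤ g β) ∧
    (∀ β : ℝ, -lamMin hA.1 < β → β ≠ (lamMin hN + lamMax hN) / 2 →
        g ((lamMin hN + lamMax hN) / 2) < g β) := by
  set a := lamMin hA.1 with ha_def
  set m := lamMin hN with hm_def
  set M := lamMax hN with hM_def
  set f := hA.1.eigenvalues
  set e := hN.eigenvalues
  have hmem : ∀ i : Fin n, a ≤ f i := fun i => Finset.inf'_le _ (Finset.mem_univ i)
  have hme : ∀ i : Fin n, m ≤ e i := fun i => Finset.inf'_le _ (Finset.mem_univ i)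
  have hMe : ∀ i : Fin n, e i ≤ M := fun i => Finset.le_sup' _ (Finset.mem_univ i)
  obtain ⟨i0, -, hi0⟩ := Finset.exists_mem_eq_inf' (Finset.univ_nonempty) f
  obtain ⟨im, -, him⟩ := Finset.exists_mem_eq_inf' (Finset.univ_nonempty) e
  obtain ⟨iM, -, hiM⟩ := Finset.exists_mem_eq_sup' (Finset.univ_nonempty) e
  have hai0 : a = f i0 := hi0
  have ham : m = e im := him
  have haM : M = e iM := hiM
  have hmM : m ≤ M := (hme iM).trans_eq haM.symm
  have hma : -a < m := hNA
  have hMa : -a < M := lt_of_lt_of_le hma hmM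
  -- formula for g on (-a, ∞)
  have hgval : ∀ β : ℝ, -a < β → g β = max (β - m) (M - β) / (a + β) := by
    intro β hβ
    rw [hg β]
    have hden : (Finset.univ.inf' Finset.univ_nonempty (fun i => |f i + β|)) = a + β := by
      apply le_antisymm
      · calc Finset.univ.inf' Finset.univ_nonempty (fun i => |f i + β|)
            ≤ |f i0 + β| := Finset.inf'_le _ (Finset.mem_univ i0)
          _ = a + β := by rw [abs_of_pos (by have := hmem i0; linarith), ← hai0]
      · apply Finset.le_inf'
        intro i _
        have h1 : 0 < f i + β := by have := hmem i; linarith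
        rw [abs_of_pos h1]
        have := hmem i; linarith
    have hnum : (Finset.univ.sup' Finset.univ_nonempty (fun i => |β - e i|))
        = max (β - m) (M - β) := by
      apply le_antisymm
      · apply Finset.sup'_le
        intro i _
        rcases abs_cases (β - e i) with ⟨h1, h2⟩ | ⟨h1, h2⟩
        · rw [h1]; exact le_max_of_le_left (by have := hme i; linarith)
        · rw [h1]; exact le_max_of_le_right (by have := hMe i; linarith)
      · apply max_le
        · calc β - m = β - e im := by rw [ham]
            _ ≤ |β - e im| := le_abs_self _
            _ ≤ _ := Finset.le_sup' (fun i => |β - e i|) (Finset.mem_univ im)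
        · calc M - β = -(β - e iM) := by rw [haM]; ring
            _ ≤ |β - e iM| := neg_le_abs _
            _ ≤ _ := Finset.le_sup' (fun i => |β - e i|) (Finset.mem_univ iM)
    rw [hden, hnum]
  set β' := (m + M) / 2 with hβ'
  have hβ'a : -a < β' := by simp only [hβ']; linarith
  have hgβ' : g β' = ((M - m) / 2) / (a + β') := by
    rw [hgval β' hβ'a]
    congr 1
    have : β' - m = (M - m) / 2 := by simp only [hβ']; ring
    have h2 : M - β' = (M - m) / 2 := by simp only [hβ']; ring
    rw [this, h2, max_self]
  have key : ∀ β : ℝ, -a < β → β ≠ β' → g β' < g β := by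
    intro β hβ hne
    rw [hgβ', hgval β hβ]
    have hd1 : 0 < a + β' := by linarith
    have hd2 : 0 < a + β := by linarith
    rw [div_lt_div_iff₀ hd1 hd2]
    rcases lt_or_gt_of_ne hne with hlt | hgt
    · have h1 : M - β ≤ max (β - m) (M - β) := le_max_right _ _
      have h2 : (M - m) / 2 * (a + β) < (M - β) * (a + β') := by
        have ht : 0 < β' - β := by linarith
        nlinarith [mul_pos ht (by linarith : (0:ℝ) < M + a)]
      nlinarith [mul_le_mul_of_nonneg_right h1 hd1.le]
    · have h1 : β - m ≤ max (β - m) (M - β) := le_max_left _ _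
      have h2 : (M - m) / 2 * (a + β) < (β - m) * (a + β') := by
        have ht : 0 < β - β' := by linarith
        nlinarith [mul_pos ht (by linarith : (0:ℝ) < m + a)]
      nlinarith [mul_le_mul_of_nonneg_right h1 hd1.le]
  refine ⟨fun β hβ => ?_, key⟩
  by_cases hne : β = β'
  · rw [hne]
  · exact (key β hβ hne).le
end
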